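/- Let M be a finite matroid that has a circuit of size d. Then every depth-decomposition (T, f) of M has depth h satisfying 2^h ≥ d. In particular, the branch-depth of M is at least log₂ d. -/

import Mathlib

/-!
Common definitions: rooted trees (encoded by a parent function), their depth,
depth-decompositions of matroids, matroid rank, circuits, contraction,
connectivity and components.
-/

/-- `u` is an ancestor of `v` (or equal to it) in the rooted tree encoded by `parent`. -/
def Anc {V : Type} (parent : V → V) (u v : V) : Prop := ∃ n : ℕ, parent^[n] v = u

/-- `(root, parent)` encodes a rooted tree: the root is its own parent and every
vertex reaches the root by iterating `parent` (each non-root vertex is joined to its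
parent by an edge). -/
def IsRootedTree {V : Type} (root : V) (parent : V → V) : Prop :=
  parent root = root ∧ ∀ v : V, ∃ n : ℕ, parent^[n] v = root

/-- The depth of a vertex in a rooted tree: the number of edges on the path from the
root to the vertex. -/
noncomputable def vdepth {V : Type} (root : V) (parent : V → V) (v : V) : ℕ :=
  sInf {n : ℕ | parent^[n] v = root}

/-- The depth of a rooted tree: the maximum number of edges on a path from the root
to a leaf, i.e. the maximal depth of a vertex. -/
noncomputable def treeDepth {V : Type} (root : V) (parent : V → V) : ℕ :=
  sSup (Set.range (vdepth root parent))

/-- A leaf of a rooted tree: a vertex that is the parent of no other vertex. -/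
def IsLeaf {V : Type} (parent : V → V) (v : V) : Prop := ∀ u : V, u ≠ v → parent u ≠ v

/-- The rank of a set `X` in a matroid `M`: the largest size of an independent subset
of `X`. -/
noncomputable def mrank {α : Type} (M : Matroid α) (X : Set α) : ℕ :=
  sSup {n : ℕ | ∃ I : Set α, I ⊆ X ∧ M.Indep I ∧ I.ncard = n}

/-- `(root, parent, f)` is a depth-decomposition of the matroid `M`: the tree is finite,
the rank of `M` equals the number of edges of the tree (one edge per non-root vertex),
and the rank of any `X ⊆ M.E` is at most the number of edges of the union `T*(X)` of
the paths from the root to the vertices of `f(X)` (one edge per non-root vertex that is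
an ancestor of, or equal to, some vertex of `f(X)`). -/
def IsDepthDecomp {α V : Type} (M : Matroid α) (root : V) (parent : V → V)
    (f : α → V) : Prop :=
  Finite V ∧ IsRootedTree root parent ∧
  mrank M M.E = Set.ncard {v : V | v ≠ root} ∧
  ∀ X : Set α, X ⊆ M.E →
    mrank M X ≤ Set.ncard {v : V | v ≠ root ∧ ∃ e ∈ X, Anc parent v (f e)}

/-- `M` has a depth-decomposition of depth at most `d`. -/
def HasDepthDecompOfDepthLE {α : Type} (M : Matroid α) (d : ℕ) : Prop :=
  ∃ (V : Type) (root : V) (parent : V → V) (f : α → V),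
    IsDepthDecomp M root parent f ∧ treeDepth root parent ≤ d

/-- The branch-depth of a matroid: the smallest depth of a depth-decomposition. -/
noncomputable def branchDepth {α : Type} (M : Matroid α) : ℕ :=
  sInf {d : ℕ | HasDepthDecompOfDepthLE M d}

/-- A circuit of a matroid: a minimal dependent set. -/
def IsCircuitOf {α : Type} (M : Matroid α) (C : Set α) : Prop :=
  M.Dep C ∧ ∀ D : Set α, M.Dep D → D ⊆ C → D = C

/-- `N` is the contraction `M / F` of the matroid `M` by the set `F`: the ground set of
`N` is `M.E \ F`, and a set `I` disjoint from `F` is independent in `N` if and only if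
`r(F ∪ I) = r(F) + |I|`. -/
def IsContractionBy {α : Type} (M : Matroid α) (F : Set α) (N : Matroid α) : Prop :=
  N.E = M.E \ F ∧
  ∀ I : Set α, N.Indep I ↔
    I ⊆ M.E \ F ∧ I.Finite ∧ mrank M (F ∪ I) = mrank M F + I.ncard

/-- A matroid is connected if its ground set is nonempty and any two distinct elements
lie in a common circuit. -/
def IsConnectedM {α : Type} (M : Matroid α) : Prop :=
  M.E.Nonempty ∧
  ∀ x ∈ M.E, ∀ y ∈ M.E, x = y ∨ ∃ C : Set α, IsCircuitOf M C ∧ x ∈ C ∧ y ∈ C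

/-- A component of a matroid: an equivalence class of the relation "equal or lying in a
common circuit" on the ground set. -/
def IsComponentOf {α : Type} (M : Matroid α) (K : Set α) : Prop :=
  ∃ x ∈ M.E,
    K = {y ∈ M.E | x = y ∨ ∃ C : Set α, IsCircuitOf M C ∧ x ∈ C ∧ y ∈ C}

/-!
Extend `C - e` to a basis `B` and put `L = B + e`. Since `C` is the fundamental circuit of `e` in
`B`, every `L - x` with `x ∈ C` is a basis, and `|L| = r(M) + 1 = |V|`. For a basis `B'` and a
vertex `u ≠ root`, the elements of `B'` that `f` maps outside the subtree at `u` have rank at most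
the number of edges outside that subtree, so at least as many elements of `B'` are mapped into the
subtree as it has vertices. Taking `B' = L - x` with `x` in the subtree, a subtree meeting `C`
receives strictly more elements of `L` than it has vertices, and this surplus pays for doubling the
weight `2 ^ (h - depth)` from one level to the next. Summing from the leaves up gives
`|C| + 2 ^ h |V| ≤ 2 ^ h (|L| + 1)` at the root, i.e. `|C| ≤ 2 ^ h`.
-/

open Set

section Tree

variable {V : Type} {root : V} {parent : V → V}

theorem anc_refl (u : V) : Anc parent u u := ⟨0, rfl⟩

theorem anc_parent_self (v : V) : Anc parent (parent v) v := ⟨1, rfl⟩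

theorem Anc.trans {u v w : V} (huv : Anc parent u v) (hvw : Anc parent v w) : Anc parent u w := by
  obtain ⟨m, hm⟩ := huv
  obtain ⟨n, hn⟩ := hvw
  exact ⟨m + n, by rw [Function.iterate_add_apply, hn, hm]⟩

theorem Anc.anc_parent_of_ne {u v : V} (h : Anc parent u v) (hne : u ≠ v) :
    Anc parent u (parent v) := by
  obtain ⟨_ | n, hn⟩ := h
  · exact absurd hn.symm hne
  · exact ⟨n, hn⟩

theorem Anc.total {u w x : V} (hu : Anc parent u x) (hw : Anc parent w x) :
    Anc parent u w ∨ Anc parent w u := by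
  obtain ⟨m, rfl⟩ := hu
  obtain ⟨n, rfl⟩ := hw
  rcases le_total m n with h | h
  · exact Or.inr ⟨n - m, by rw [← Function.iterate_add_apply, Nat.sub_add_cancel h]⟩
  · exact Or.inl ⟨m - n, by rw [← Function.iterate_add_apply, Nat.sub_add_cancel h]⟩

theorem Anc.eq_or_exists_child {u x : V} (h : Anc parent u x) :
    x = u ∨ ∃ j, (parent j = u ∧ j ≠ u) ∧ Anc parent j x := by
  obtain ⟨n, hn⟩ := h
  induction n with
  | zero => exact Or.inl hn
  | succ n ih =>
    rw [Function.iterate_succ_apply'] at hn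
    by_cases hj : parent^[n] x = u
    · exact ih hj
    · exact Or.inr ⟨_, ⟨hn, hj⟩, n, rfl⟩

theorem IsRootedTree.eq_root_of_anc_root (hT : IsRootedTree root parent) {u : V}
    (h : Anc parent u root) : u = root := by
  obtain ⟨n, hn⟩ := h
  rwa [Function.iterate_fixed hT.1, eq_comm] at hn

/-- A cycle of `parent` through `v` is trivial: the root is reachable from `v` and fixed by
`parent`, so it would force `v = root`. -/
theorem IsRootedTree.anc_antisymm (hT : IsRootedTree root parent) {u v : V}
    (huv : Anc parent u v) (hvu : Anc parent v u) : u = v := by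
  obtain ⟨a, ha⟩ := huv
  obtain ⟨b, hb⟩ := hvu
  rcases (a + b).eq_zero_or_pos with h0 | hpos
  · obtain rfl : a = 0 := by omega
    exact ha.symm
  obtain ⟨k, hk⟩ := hT.2 v
  have hper : parent^[(a + b) * k] v = v :=
    Function.IsPeriodicPt.mul_const (f := parent) (x := v)
      (by rw [Function.IsPeriodicPt, Function.IsFixedPt, add_comm,
        Function.iterate_add_apply, ha, hb]) k
  have hv : v = root := by
    rw [← hper, ← Nat.sub_add_cancel (Nat.le_mul_of_pos_left k hpos),
      Function.iterate_add_apply, hk, Function.iterate_fixed hT.1]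
  rw [← ha, hv, Function.iterate_fixed hT.1]

theorem IsRootedTree.vdepth_eq_vdepth_parent_add_one (hT : IsRootedTree root parent) {v : V}
    (hv : v ≠ root) : vdepth root parent v = vdepth root parent (parent v) + 1 := by
  apply le_antisymm
  · exact Nat.sInf_le (show parent^[_ + 1] v = root from Nat.sInf_mem (hT.2 (parent v)))
  · have hmem : parent^[vdepth root parent v] v = root := Nat.sInf_mem (hT.2 v)
    rcases hk : vdepth root parent v with _ | k
    · rw [hk] at hmem
      exact absurd hmem hv
    · rw [hk, Function.iterate_succ_apply] at hmem
      exact Nat.succ_le_succ (Nat.sInf_le hmem)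

theorem vdepth_le_treeDepth [Finite V] (v : V) :
    vdepth root parent v ≤ treeDepth root parent :=
  le_csSup (finite_range _).bddAbove (mem_range_self v)

variable (parent) in
def descendants (u : V) : Set V := {v | Anc parent u v}

variable (parent) in
noncomputable def children [Finite V] (u : V) : Finset V :=
  (toFinite {j | parent j = u ∧ j ≠ u}).toFinset

variable [Finite V]

theorem mem_children {u j : V} : j ∈ children parent u ↔ parent j = u ∧ j ≠ u :=
  Finite.mem_toFinset _

theorem IsRootedTree.ne_root_of_mem_children (hT : IsRootedTree root parent) {u j : V}
    (hj : j ∈ children parent u) : j ≠ root := by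
  rintro rfl
  obtain ⟨hu, hne⟩ := mem_children.1 hj
  exact hne (hT.1 ▸ hu)

theorem IsRootedTree.vdepth_of_mem_children (hT : IsRootedTree root parent) {u j : V}
    (hj : j ∈ children parent u) : vdepth root parent j = vdepth root parent u + 1 := by
  rw [hT.vdepth_eq_vdepth_parent_add_one (hT.ne_root_of_mem_children hj), (mem_children.1 hj).1]

theorem IsRootedTree.induction_on_children (hT : IsRootedTree root parent) {P : V → Prop}
    (step : ∀ u, (∀ j ∈ children parent u, P j) → P u) (u : V) : P u := by
  refine (measure fun v => treeDepth root parent - vdepth root parent v).wf.induction u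
    fun v ih => step v fun j hj => ih j ?_
  have := vdepth_le_treeDepth (root := root) (parent := parent) j
  show treeDepth root parent - vdepth root parent j < treeDepth root parent - vdepth root parent v
  rw [hT.vdepth_of_mem_children hj] at this ⊢
  omega

theorem descendants_eq_insert_biUnion (u : V) :
    descendants parent u = insert u (⋃ j ∈ children parent u, descendants parent j) := by
  ext x
  simp only [mem_insert_iff, mem_iUnion, exists_prop, mem_children]
  refine ⟨fun h => h.eq_or_exists_child, ?_⟩
  rintro (rfl | ⟨j, ⟨rfl, -⟩, hjx⟩)
  · exact anc_refl x
  · exact (anc_parent_self j).trans hjx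

theorem IsRootedTree.not_anc_of_mem_children (hT : IsRootedTree root parent) {u j : V}
    (hj : j ∈ children parent u) : ¬ Anc parent j u := fun h =>
  (mem_children.1 hj).2 (hT.anc_antisymm h ⟨1, (mem_children.1 hj).1⟩)

theorem IsRootedTree.pairwiseDisjoint_descendants (hT : IsRootedTree root parent) (u : V) :
    (children parent u : Set V).PairwiseDisjoint (descendants parent) := by
  intro j hj j' hj' hne
  refine disjoint_left.2 fun x hjx hj'x => ?_
  rcases Anc.total hjx hj'x with h | h
  · exact hT.not_anc_of_mem_children hj ((mem_children.1 hj').1 ▸ h.anc_parent_of_ne hne)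
  · exact hT.not_anc_of_mem_children hj' ((mem_children.1 hj).1 ▸ h.anc_parent_of_ne hne.symm)

theorem IsRootedTree.ncard_inter_preimage_descendants {α : Type} (hT : IsRootedTree root parent)
    {S : Set α} (hS : S.Finite) (f : α → V) (u : V) :
    (S ∩ f ⁻¹' descendants parent u).ncard =
      (S ∩ f ⁻¹' {u}).ncard + ∑ j ∈ children parent u, (S ∩ f ⁻¹' descendants parent j).ncard := by
  have hdisj : Disjoint (S ∩ f ⁻¹' {u})
      (⋃ j ∈ children parent u, S ∩ f ⁻¹' descendants parent j) := by
    refine disjoint_left.2 fun e ⟨_, he⟩ he' => ?_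
    simp only [mem_iUnion, exists_prop] at he'
    obtain ⟨j, hj, -, hje⟩ := he'
    exact hT.not_anc_of_mem_children hj ((mem_singleton_iff.1 he) ▸ hje)
  rw [descendants_eq_insert_biUnion, insert_eq, preimage_union, inter_union_distrib_left,
    preimage_iUnion₂, inter_iUnion₂, ncard_union_eq hdisj (hS.subset inter_subset_left)
      (hS.subset (iUnion₂_subset fun _ _ => inter_subset_left)), ← Finset.set_biUnion_coe,
    (Finset.finite_toSet _).ncard_biUnion (fun _ _ => hS.subset inter_subset_left)
      fun j hj j' hj' hne => ((hT.pairwiseDisjoint_descendants u hj hj' hne).preimage f).mono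
        inter_subset_right inter_subset_right,
    finsum_mem_coe_finset]

theorem IsRootedTree.ncard_descendants (hT : IsRootedTree root parent) (u : V) :
    (descendants parent u).ncard = 1 + ∑ j ∈ children parent u, (descendants parent j).ncard := by
  simpa using hT.ncard_inter_preimage_descendants finite_univ id u

theorem IsRootedTree.ncard_inter_add_two_pow_mul_ncard_descendants_le {α : Type}
    (hT : IsRootedTree root parent) {f : α → V} {C L : Set α} (hL : L.Finite) (hCL : C ⊆ L)
    (hC : C.Nonempty)
    (hdense : ∀ j ≠ root, ∀ x ∈ C,
      (descendants parent j).ncard ≤ ((L \ {x}) ∩ f ⁻¹' descendants parent j).ncard)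
    (u : V) :
    (C ∩ f ⁻¹' descendants parent u).ncard +
        2 ^ (treeDepth root parent - vdepth root parent u) * (descendants parent u).ncard ≤
      2 ^ (treeDepth root parent - vdepth root parent u) *
        ((L ∩ f ⁻¹' descendants parent u).ncard + 1) := by
  induction u using hT.induction_on_children with | step u ih
  set m := treeDepth root parent - vdepth root parent u
  have hchild : ∀ j ∈ children parent u,
      (C ∩ f ⁻¹' descendants parent j).ncard + 2 ^ m * (descendants parent j).ncard ≤
        2 ^ m * (L ∩ f ⁻¹' descendants parent j).ncard := by
    intro j hj
    have hjr := hT.ne_root_of_mem_children hj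
    have hm : m = treeDepth root parent - vdepth root parent j + 1 := by
      have := vdepth_le_treeDepth (root := root) (parent := parent) j
      rw [hT.vdepth_of_mem_children hj] at this ⊢
      omega
    have hLj : (L ∩ f ⁻¹' descendants parent j).Finite := hL.subset inter_subset_left
    obtain ⟨x, hx⟩ := hC
    have hle : (descendants parent j).ncard ≤ (L ∩ f ⁻¹' descendants parent j).ncard :=
      (hdense j hjr x hx).trans (ncard_le_ncard (inter_subset_inter_left _ sdiff_subset) hLj)
    rcases (C ∩ f ⁻¹' descendants parent j).eq_empty_or_nonempty with hCj | ⟨y, hyC, hyj⟩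
    · rw [hCj, ncard_empty, zero_add]
      exact Nat.mul_le_mul_left _ hle
    have hlt : (descendants parent j).ncard < (L ∩ f ⁻¹' descendants parent j).ncard := by
      refine (hdense j hjr y hyC).trans_lt ?_
      rw [← inter_sdiff_right_comm]
      exact ncard_sdiff_singleton_lt_of_mem ⟨hCL hyC, hyj⟩ hLj
    rw [hm, pow_succ]
    nlinarith [ih j hj,
      Nat.mul_le_mul_left (2 ^ (treeDepth root parent - vdepth root parent j)) hlt]
  have hsum := Finset.sum_le_sum hchild
  rw [Finset.sum_add_distrib, ← Finset.mul_sum, ← Finset.mul_sum] at hsum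
  have hroot : (C ∩ f ⁻¹' {u}).ncard ≤ 2 ^ m * (L ∩ f ⁻¹' {u}).ncard :=
    (ncard_le_ncard (inter_subset_inter_left _ hCL) (hL.subset inter_subset_left)).trans
      (Nat.le_mul_of_pos_left _ (Nat.two_pow_pos m))
  rw [hT.ncard_inter_preimage_descendants (hL.subset hCL) f u,
    hT.ncard_inter_preimage_descendants hL f u, hT.ncard_descendants u]
  nlinarith

end Tree

section Matroid

variable {α : Type} {M : Matroid α}

theorem IsCircuitOf.isCircuit {C : Set α} (hC : IsCircuitOf M C) : M.IsCircuit C :=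
  Matroid.isCircuit_iff.2 ⟨hC.1, fun D hD hDC => hC.2 D hD hDC⟩

theorem Matroid.IsCircuit.exists_superset_forall_sdiff_singleton_isBase {C : Set α}
    (hC : M.IsCircuit C) : ∃ L, C ⊆ L ∧ ∀ x ∈ C, M.IsBase (L \ {x}) := by
  obtain ⟨e, he⟩ := hC.nonempty
  obtain ⟨B, hB, hCB⟩ := (hC.sdiff_singleton_indep he).exists_isBase_superset
  have hCeB : C ⊆ insert e B := sdiff_singleton_subset_iff.1 hCB
  have heB : e ∉ B := fun heB =>
    hC.not_indep (hB.indep.subset (by rwa [insert_eq_of_mem heB] at hCeB))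
  have hecl : e ∈ M.closure B := hB.closure_eq ▸ hC.subset_ground he
  refine ⟨insert e B, hCeB, fun x hx => ?_⟩
  obtain rfl | hxe := eq_or_ne x e
  · rwa [insert_sdiff_self_of_notMem heB]
  refine hB.exchange_isBase_of_indep' (hCB ⟨hx, hxe⟩) heB ?_
  rw [← hB.indep.mem_fundCircuit_iff hecl heB, ← hC.eq_fundCircuit_of_subset hB.indep hCeB]
  exact hx

variable [M.Finite]

theorem mrank_eq_ncard_of_isBasis {I X : Set α} (hI : M.IsBasis I X) : mrank M X = I.ncard := by
  refine IsGreatest.csSup_eq ⟨⟨I, hI.subset, hI.indep, rfl⟩, ?_⟩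
  rintro _ ⟨J, hJX, hJ, rfl⟩
  rw [ncard_def, ncard_def]
  exact ENat.toNat_le_toNat ((hJ.encard_le_eRk_of_subset hJX).trans_eq hI.encard_eq_eRk.symm)
    hI.indep.finite.encard_lt_top.ne

variable {V : Type} {root : V} {parent : V → V} {f : α → V}

theorem IsDepthDecomp.ncard_isBase (h : IsDepthDecomp M root parent f) {B : Set α}
    (hB : M.IsBase B) : B.ncard = {v | v ≠ root}.ncard := by
  rw [← h.2.2.1, mrank_eq_ncard_of_isBasis hB.isBasis_ground]

theorem IsDepthDecomp.ncard_descendants_le (h : IsDepthDecomp M root parent f) {B : Set α}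
    (hB : M.IsBase B) {u : V} (hu : u ≠ root) :
    (descendants parent u).ncard ≤ (B ∩ f ⁻¹' descendants parent u).ncard := by
  have : Finite V := h.1
  set Y := f ⁻¹' descendants parent u
  have hout : {v | v ≠ root ∧ ∃ e ∈ B \ Y, Anc parent v (f e)} ⊆
      {v | v ≠ root} \ descendants parent u := by
    rintro v ⟨hv, e, ⟨-, heY⟩, hve⟩
    exact ⟨hv, fun huv => heY (Anc.trans huv hve)⟩
  have hdesc : descendants parent u ⊆ {v | v ≠ root} := by
    rintro v huv rfl
    exact hu (h.2.1.eq_root_of_anc_root huv)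
  have hrank := h.2.2.2 (B \ Y) (sdiff_subset.trans hB.subset_ground)
  rw [mrank_eq_ncard_of_isBasis (hB.indep.subset sdiff_subset).isBasis_self] at hrank
  have hB' := ncard_inter_add_ncard_sdiff_eq_ncard B Y hB.indep.finite
  have hW := ncard_sdiff_add_ncard_of_subset hdesc
  have := ncard_le_ncard hout
  have := h.ncard_isBase hB
  omega

end Matroid

/-- If a finite matroid `M` has a circuit of size `d`, then every
depth-decomposition of `M` of depth `h` satisfies `2 ^ h ≥ d`; in particular the
branch-depth of `M` is at least `log₂ d`. -/
theorem circuit_size_le_two_pow_depth {α V : Type} (M : Matroid α) [M.Finite]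
    (C : Set α) (d : ℕ) (hC : IsCircuitOf M C) (hd : C.ncard = d)
    (root : V) (parent : V → V) (f : α → V)
    (h : IsDepthDecomp M root parent f) :
    d ≤ 2 ^ treeDepth root parent := by
  have : Finite V := h.1
  obtain ⟨L, hCL, hL⟩ := hC.isCircuit.exists_superset_forall_sdiff_singleton_isBase
  obtain ⟨x, hx⟩ := hC.isCircuit.nonempty
  have hLfin : L.Finite := ((hL x hx).indep.finite).of_sdiff (finite_singleton x)
  have hLcard : L.ncard = Nat.card V := by
    rw [← ncard_sdiff_singleton_add_one (hCL hx) hLfin, h.ncard_isBase (hL x hx), ← ncard_univ,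
      ← ncard_sdiff_singleton_add_one (mem_univ root)]
    congr 2
    ext
    simp
  have key := h.2.1.ncard_inter_add_two_pow_mul_ncard_descendants_le hLfin hCL ⟨x, hx⟩
    (fun j hj y hy => h.ncard_descendants_le (hL y hy) hj) root
  have hroot : descendants parent root = univ := eq_univ_of_forall h.2.1.2
  have hvroot : vdepth root parent root = 0 := Nat.sInf_eq_zero.2 (Or.inl rfl)
  rw [hroot, hvroot, Nat.sub_zero, preimage_univ, inter_univ, inter_univ, ncard_univ, hLcard,
    hd] at key
  nlinarith
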